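/- Fix reals λ, μ, θ > 0 and natural numbers n_k ≤ K. Define b : ℕ → ℝ backwards by b(K) = λ / (n_kμ + (K − n_k)θ) and, for n_k + 1 ≤ j ≤ K − 1, b(j) = λ / (λ + n_kμ + (j − n_k)θ − (n_kμ + (j + 1 − n_k)θ)·b(j+1)). Then for every j with n_k + 1 ≤ j ≤ K, we have 0 < b(j) ≤ λ / (n_kμ + (j − n_k)θ). -/

import Mathlib

/-!
Write `D j = n_k μ + (j - n_k) θ`, so that `b j = λ / (λ + D j - D (j+1) b (j+1))`.
If `b (j+1) ≤ λ / D (j+1)` then `D (j+1) b (j+1) ≤ λ`, so the denominator is at least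
`D j > 0`; this gives both bounds for `b j`, and they propagate down from `b K = λ / D K`.
-/

lemma div_recursion_bounds {lam d d' x : ℝ} (hlam : 0 < lam) (hd : 0 < d) (hd' : 0 < d')
    (hx : x ≤ lam / d') :
    0 < lam / (lam + d - d' * x) ∧ lam / (lam + d - d' * x) ≤ lam / d := by
  have hprod : d' * x ≤ lam := by
    rw [le_div_iff₀ hd'] at hx
    linarith
  have hdenom : d ≤ lam + d - d' * x := by linarith
  exact ⟨div_pos hlam (hd.trans_le hdenom), div_le_div_of_nonneg_left hlam.le hd hdenom⟩

lemma backward_recursion_bounds {lam : ℝ} (hlam : 0 < lam) {D b : ℕ → ℝ} {m K : ℕ}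
    (hD : ∀ j, m ≤ j → j ≤ K → 0 < D j)
    (hbK : b K = lam / D K)
    (hbrec : ∀ j, m ≤ j → j < K → b j = lam / (lam + D j - D (j + 1) * b (j + 1)))
    {j : ℕ} (hmj : m ≤ j) (hjK : j ≤ K) :
    0 < b j ∧ b j ≤ lam / D j := by
  induction hjK using Nat.decreasingInduction with
  | self =>
    rw [hbK]
    exact ⟨div_pos hlam (hD K hmj le_rfl), le_rfl⟩
  | of_succ j hjK ih =>
    rw [hbrec j hmj hjK]
    exact div_recursion_bounds hlam (hD j hmj hjK.le) (hD (j + 1) (by omega) hjK)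
      (ih (by omega)).2

theorem stmt_3_general (lam mu th : ℝ) (hlam : 0 < lam) (hmu : 0 < mu) (hth : 0 < th)
    (nk K : ℕ)
    (b : ℕ → ℝ)
    (hbK : b K = lam / (nk * mu + ((K : ℝ) - nk) * th))
    (hbrec : ∀ j : ℕ, nk + 1 ≤ j → j < K →
      b j = lam / (lam + nk * mu + ((j : ℝ) - nk) * th
        - (nk * mu + ((j : ℝ) + 1 - nk) * th) * b (j + 1))) :
    ∀ j : ℕ, nk + 1 ≤ j → j ≤ K →
      0 < b j ∧ b j ≤ lam / (nk * mu + ((j : ℝ) - nk) * th) := by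
  intro j hj hjK
  refine backward_recursion_bounds (D := fun j : ℕ => nk * mu + ((j : ℝ) - nk) * th)
    hlam ?_ hbK ?_ hj hjK
  · intro i hi _
    have hgap : (nk : ℝ) + 1 ≤ i := by exact_mod_cast hi
    have hnkmu : 0 ≤ (nk : ℝ) * mu := by positivity
    exact add_pos_of_nonneg_of_pos hnkmu (mul_pos (by linarith) hth)
  · intro i hi hiK
    rw [hbrec i hi hiK]
    push_cast
    ring_nf

/-- Theorem 3 (b-coefficient part): bounds for the backward-recursion
coefficients `b^{(k)}_j` at the top level of the Markov chain (all VNF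
instances on, no setup terms). -/
theorem stmt_3 (lam mu th : ℝ) (hlam : 0 < lam) (hmu : 0 < mu) (hth : 0 < th)
    (nk K : ℕ) (hnkK : nk ≤ K)
    (b : ℕ → ℝ)
    (hbK : b K = lam / (nk * mu + ((K : ℝ) - nk) * th))
    (hbrec : ∀ j : ℕ, nk + 1 ≤ j → j < K →
      b j = lam / (lam + nk * mu + ((j : ℝ) - nk) * th
        - (nk * mu + ((j : ℝ) + 1 - nk) * th) * b (j + 1))) :
    ∀ j : ℕ, nk + 1 ≤ j → j ≤ K →
      0 < b j ∧ b j ≤ lam / (nk * mu + ((j : ℝ) - nk) * th) :=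
  stmt_3_general lam mu th hlam hmu hth nk K b hbK hbrec
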